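/- Let (𝒳, δ) be a metric space, n even, X_1,…,X_n ∈ 𝒳, u ∈ U, S = {i : u_i = 1} and S^c = {i : u_i = −1}. Then sup over all 1-Lipschitz functions f : 𝒳 → ℝ of Σ_{i=1}^n u_i f(X_i) equals the minimum over all bijections π : S → S^c of Σ_{i ∈ S} δ(X_i, X_{π(i)}). (Kantorovich-type duality: the worst-case Lipschitz imbalance of a fixed balanced assignment equals the minimum-cost bipartite matching between the two groups.) -/

import Mathlib

/-!
Every 1-Lipschitz `f` and every matching `π : S → Sᶜ` give
`∑ᵢ uᵢ f(Xᵢ) = ∑_{i ∈ S} (f(Xᵢ) - f(X_{π i})) ≤ ∑_{i ∈ S} δ(Xᵢ, X_{π i})`,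
so the supremum is at most the minimum. For equality we use LP duality for the assignment
problem with costs `c i j = δ(Xᵢ, Xⱼ)`: a potential `β` on `Sᶜ` maximising
`∑ᵢ minⱼ (c i j + β j) - ∑ⱼ β j` exists by compactness, and its tight edges (those attaining the
row minimum) satisfy Hall's condition, since otherwise raising `β` on the neighbourhood of a
violating set would increase the objective. A perfect matching `σ` of tight edges together with
the 1-Lipschitz function `f z = minⱼ (δ(z, Xⱼ) + β j)` then attains `∑ᵢ δ(Xᵢ, X_{σ i})`.
-/

open scoped Classical BigOperators

/-- The ±1 sign associated to a boolean assignment: `true ↦ 1`, `false ↦ -1`. -/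
noncomputable def sgn {n : ℕ} (u : Fin n → Bool) (i : Fin n) : ℝ :=
  if u i then 1 else -1

open Finset

theorem sSup_eq_sInf_of_forall_le {α : Type*} [ConditionallyCompleteLinearOrder α]
    {L R : Set α} (h : ∀ l ∈ L, ∀ r ∈ R, l ≤ r) {a b : α} (ha : a ∈ L) (hb : b ∈ R)
    (hba : b ≤ a) : sSup L = sInf R := by
  have hab : a = b := le_antisymm (h a ha b hb) hba
  rw [IsGreatest.csSup_eq ⟨ha, fun l hl => hab ▸ h l hl b hb⟩,
    IsLeast.csInf_eq ⟨hb, fun r hr => hab ▸ h a ha r hr⟩, hab]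

theorem exists_pos_le_of_pos {α : Type*} [Fintype α] (g : α → ℝ) :
    ∃ ε > 0, ∀ a, 0 < g a → ε ≤ g a := by
  obtain h | h := (univ.filter fun a => 0 < g a).eq_empty_or_nonempty
  · exact ⟨1, one_pos, fun a ha =>
      absurd ha (by simpa using filter_eq_empty_iff.1 h (mem_univ a))⟩
  · exact ⟨_, (lt_inf'_iff h).2 fun a ha => (mem_filter.1 ha).2,
      fun a ha => inf'_le _ (mem_filter.2 ⟨mem_univ a, ha⟩)⟩

section Assignment

variable {ι κ : Type*} [Fintype κ] [Nonempty κ] (c : ι → κ → ℝ)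

noncomputable def rowMin (β : κ → ℝ) (i : ι) : ℝ :=
  univ.inf' univ_nonempty fun j => c i j + β j

noncomputable def tightSet (β : κ → ℝ) (i : ι) : Finset κ :=
  univ.filter fun j => c i j + β j = rowMin c β i

theorem rowMin_le (β : κ → ℝ) (i : ι) (j : κ) : rowMin c β i ≤ c i j + β j :=
  inf'_le _ (mem_univ j)

theorem rowMin_add_const (β : κ → ℝ) (a : ℝ) (i : ι) :
    rowMin c (fun j => β j + a) i = rowMin c β i + a := by
  simp only [rowMin, ← add_assoc]
  exact (map_finset_inf' (OrderIso.addRight a) univ_nonempty _).symm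

variable [Fintype ι]

/-- The dual objective of the assignment problem with cost matrix `c`, at the potential `β`. -/
noncomputable def dualValue (β : κ → ℝ) : ℝ :=
  ∑ i, rowMin c β i - ∑ j, β j

theorem dualValue_add_const (h : Fintype.card ι = Fintype.card κ) (β : κ → ℝ) (a : ℝ) :
    dualValue c (fun j => β j + a) = dualValue c β := by
  simp only [dualValue, rowMin_add_const, sum_add_distrib, sum_const, card_univ, h]
  ring

theorem continuous_dualValue : Continuous (dualValue c) :=
  (continuous_finsetSum _ fun _ _ => Continuous.finset_inf'_apply _ fun j _ =>
    continuous_const.add (continuous_apply j)).sub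
    (continuous_finsetSum _ fun j _ => continuous_apply j)

theorem dualValue_le_dualValue_min {β : κ → ℝ} {j₀ : κ} {M : ℝ}
    (hM : ∀ i j, c i j₀ + β j₀ ≤ c i j + M) :
    dualValue c β ≤ dualValue c fun j => min (β j) M := by
  have hrow : ∀ i, rowMin c β i ≤ rowMin c (fun j => min (β j) M) i := fun i =>
    le_inf' _ _ fun j _ => (add_min (c i j) (β j) M).symm ▸
      le_min (rowMin_le c β i j) ((rowMin_le c β i j₀).trans (hM i j))
  have := sum_le_sum fun i (_ : i ∈ univ) => hrow i
  have := sum_le_sum fun j (_ : j ∈ univ) => min_le_left (β j) M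
  unfold dualValue
  linarith

/-- Translating a potential so that its minimum is `0` and then truncating it at the largest
cost difference within a row does not decrease `dualValue`, so its supremum is attained on a box. -/
theorem exists_forall_dualValue_le (h : Fintype.card ι = Fintype.card κ) :
    ∃ β, ∀ β', dualValue c β' ≤ dualValue c β := by
  obtain ⟨M, hM⟩ := (Set.finite_range fun p : ι × κ × κ => c p.1 p.2.1 - c p.1 p.2.2).bddAbove
  set B := max M 0
  obtain ⟨β, -, hβ⟩ :=
    (isCompact_univ_pi fun _ : κ => isCompact_Icc (a := 0) (b := B)).exists_isMaxOn
      ⟨0, fun j _ => ⟨le_rfl, le_max_right M 0⟩⟩ (continuous_dualValue c).continuousOn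
  refine ⟨β, fun β' => ?_⟩
  obtain ⟨j₀, -, hj₀⟩ := exists_mem_eq_inf' univ_nonempty β'
  have hmin : ∀ j, β' j₀ ≤ β' j := fun j => hj₀ ▸ inf'_le _ (mem_univ j)
  calc dualValue c β' = dualValue c fun j => β' j + -β' j₀ := (dualValue_add_const c h β' _).symm
    _ ≤ dualValue c fun j => min (β' j + -β' j₀) B := by
      refine dualValue_le_dualValue_min c (j₀ := j₀) fun i j => ?_
      have := (hM ⟨(i, j₀, j), rfl⟩).trans (le_max_left M 0)
      linarith
    _ ≤ dualValue c β :=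
      hβ fun j _ => ⟨le_min (by linarith [hmin j]) (le_max_right M 0), min_le_right _ _⟩

/-- Raising `β` by a small `ε` on the tight neighbourhood of `s` raises the row minimum of every
`i ∈ s` by `ε`, and costs `ε` per neighbour. -/
theorem exists_dualValue_gt_of_card_biUnion_lt (β : κ → ℝ) {s : Finset ι}
    (hs : #(s.biUnion (tightSet c β)) < #s) : ∃ β', dualValue c β < dualValue c β' := by
  set N := s.biUnion (tightSet c β)
  obtain ⟨ε, hε, hgap⟩ :=
    exists_pos_le_of_pos fun p : ι × κ => c p.1 p.2 + β p.2 - rowMin c β p.1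
  have hrow : ∀ i, rowMin c β i + (if i ∈ s then ε else 0) ≤
      rowMin c (fun j => β j + if j ∈ N then ε else 0) i := by
    intro i
    refine le_inf' _ _ fun j _ => ?_
    have hraise : 0 ≤ if j ∈ N then ε else 0 := by split_ifs <;> linarith
    have hgain : (if i ∈ s then ε else 0) ≤ ε := by split_ifs <;> linarith
    by_cases hj : j ∈ tightSet c β i
    · have htight : c i j + β j = rowMin c β i := (mem_filter.1 hj).2
      have : (if i ∈ s then ε else 0) ≤ if j ∈ N then ε else 0 := by
        by_cases hi : i ∈ s
        · simp [hi, N, mem_biUnion.2 ⟨i, hi, hj⟩]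
        · simpa [hi] using hraise
      linarith
    · have hlt : rowMin c β i < c i j + β j := (rowMin_le c β i j).lt_of_ne fun h =>
        hj (mem_filter.2 ⟨mem_univ j, h.symm⟩)
      have := hgap (i, j) (by simpa using hlt)
      simp only at this
      linarith
  refine ⟨fun j => β j + if j ∈ N then ε else 0, ?_⟩
  have hsum := sum_le_sum fun i (_ : i ∈ univ) => hrow i
  simp only [sum_add_distrib, sum_ite_mem, univ_inter, sum_const, nsmul_eq_mul] at hsum
  simp only [dualValue, sum_add_distrib, sum_ite_mem, univ_inter, sum_const, nsmul_eq_mul]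
  have := mul_lt_mul_of_pos_right (show (#N : ℝ) < #s by exact_mod_cast hs) hε
  linarith

end Assignment

theorem exists_equiv_forall_add_le {ι κ : Type*} [Fintype ι] [Fintype κ]
    (h : Fintype.card ι = Fintype.card κ) (c : ι → κ → ℝ) :
    ∃ σ : ι ≃ κ, ∃ β : κ → ℝ, ∀ i j, c i (σ i) + β (σ i) ≤ c i j + β j := by
  cases isEmpty_or_nonempty κ with
  | inl _ =>
    have : IsEmpty ι := Fintype.card_eq_zero_iff.1 (h.trans Fintype.card_eq_zero)
    exact ⟨Fintype.equivOfCardEq h, 0, isEmptyElim⟩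
  | inr _ =>
    obtain ⟨β, hβ⟩ := exists_forall_dualValue_le c h
    have hall (s : Finset ι) : #s ≤ #(s.biUnion (tightSet c β)) := not_lt.1 fun hs =>
      let ⟨β', hβ'⟩ := exists_dualValue_gt_of_card_biUnion_lt c β hs
      absurd hβ' (not_lt.2 (hβ β'))
    obtain ⟨F, hF, hFt⟩ := (all_card_le_biUnion_card_iff_exists_injective _).1 hall
    refine ⟨.ofBijective F ((Fintype.bijective_iff_injective_and_card F).2 ⟨hF, h⟩), β,
      fun i j => ?_⟩
    simpa [(mem_filter.1 (hFt i)).2] using rowMin_le c β i j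

section Lipschitz

variable {𝒳 : Type*} [PseudoMetricSpace 𝒳]

theorem exists_lipschitz_equiv_sum_dist_le {ι κ : Type*} [Fintype ι] [Fintype κ]
    (h : Fintype.card ι = Fintype.card κ) (x : ι → 𝒳) (y : κ → 𝒳) :
    ∃ f : 𝒳 → ℝ, LipschitzWith 1 f ∧ ∃ σ : ι ≃ κ,
      ∑ i, dist (x i) (y (σ i)) ≤ ∑ i, f (x i) - ∑ j, f (y j) := by
  obtain ⟨σ, β, hσ⟩ := exists_equiv_forall_add_le h fun i j => dist (x i) (y j)
  cases isEmpty_or_nonempty κ with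
  | inl _ =>
    have : IsEmpty ι := σ.isEmpty
    exact ⟨0, (LipschitzWith.const 0).weaken zero_le_one, σ, by simp⟩
  | inr _ =>
    let f := rowMin (fun z j => dist z (y j)) β
    have hf : LipschitzWith 1 f := LipschitzWith.of_le_add fun z w => by
      obtain ⟨j, -, hj⟩ := exists_mem_eq_inf' univ_nonempty fun j => dist w (y j) + β j
      calc f z ≤ dist z (y j) + β j := rowMin_le _ β z j
        _ ≤ f w + dist z w := by
          rw [show f w = _ from hj]
          linarith [dist_triangle z w (y j)]
    have hx i : dist (x i) (y (σ i)) + β (σ i) ≤ f (x i) := le_inf' _ _ fun j _ => hσ i j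
    have hy j : f (y j) ≤ β j := by simpa using rowMin_le (fun z j => dist z (y j)) β (y j) j
    refine ⟨f, hf, σ, ?_⟩
    have hxs := sum_le_sum fun i (_ : i ∈ univ) => hx i
    have hys := sum_le_sum fun j (_ : j ∈ univ) => hy j
    rw [sum_add_distrib, Equiv.sum_comp σ β] at hxs
    linarith

variable {α : Type*} {s t : Finset α}

theorem sum_sub_sum_le_sum_dist (hst : #s = #t) {f : 𝒳 → ℝ} (hf : LipschitzWith 1 f)
    (X : α → 𝒳) {π : α → α} (hinj : Set.InjOn π s) (hmaps : Set.MapsTo π s t) :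
    ∑ i ∈ s, f (X i) - ∑ j ∈ t, f (X j) ≤ ∑ i ∈ s, dist (X i) (X (π i)) := by
  have himage : s.image π = t :=
    eq_of_subset_of_card_le (image_subset_iff.2 hmaps) (by rw [card_image_of_injOn hinj, hst])
  rw [← himage, sum_image hinj, ← sum_sub_distrib]
  exact sum_le_sum fun i _ => (le_abs_self _).trans
    (by simpa [Real.dist_eq] using hf.dist_le_mul (X i) (X (π i)))

theorem exists_lipschitz_injOn_sum_dist_le (hst : #s = #t) (X : α → 𝒳) :
    ∃ f : 𝒳 → ℝ, LipschitzWith 1 f ∧ ∃ π : α → α, Set.InjOn π s ∧ Set.MapsTo π s t ∧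
      ∑ i ∈ s, dist (X i) (X (π i)) ≤ ∑ i ∈ s, f (X i) - ∑ j ∈ t, f (X j) := by
  obtain ⟨f, hf, σ, hσ⟩ := exists_lipschitz_equiv_sum_dist_le (by simpa using hst)
    (fun i : s => X i) (fun j : t => X j)
  let π : α → α := fun i => if hi : i ∈ s then σ ⟨i, hi⟩ else i
  have hπ (i : s) : π i = σ i := dif_pos i.2
  refine ⟨f, hf, π, fun i hi j hj hij => ?_, fun i hi => ?_, ?_⟩
  · rw [hπ ⟨i, hi⟩, hπ ⟨j, hj⟩, SetCoe.ext_iff, σ.apply_eq_iff_eq] at hij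
    exact congrArg Subtype.val hij
  · exact hπ ⟨i, hi⟩ ▸ (σ ⟨i, hi⟩).2
  · simpa only [← sum_coe_sort s, ← sum_coe_sort t, hπ] using hσ

theorem sSup_sum_sub_sum_eq_sInf_sum_dist (hst : #s = #t) (X : α → 𝒳) :
    sSup {r | ∃ f : 𝒳 → ℝ, LipschitzWith 1 f ∧ r = ∑ i ∈ s, f (X i) - ∑ j ∈ t, f (X j)} =
      sInf {r | ∃ π : α → α, Set.InjOn π s ∧ Set.MapsTo π s t ∧
        r = ∑ i ∈ s, dist (X i) (X (π i))} := by
  obtain ⟨f, hf, π, hinj, hmaps, hle⟩ := exists_lipschitz_injOn_sum_dist_le hst X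
  refine sSup_eq_sInf_of_forall_le ?_ ⟨f, hf, rfl⟩ ⟨π, hinj, hmaps, rfl⟩ hle
  rintro _ ⟨f, hf, rfl⟩ _ ⟨π, hinj, hmaps, rfl⟩
  exact sum_sub_sum_le_sum_dist hst hf X hinj hmaps

end Lipschitz

section Sign

variable {n : ℕ} (u : Fin n → Bool)

@[simp]
theorem sgn_eq_one_iff (i : Fin n) : sgn u i = 1 ↔ u i := by
  unfold sgn; split_ifs with h <;> norm_num [h]

@[simp]
theorem sgn_eq_neg_one_iff (i : Fin n) : sgn u i = -1 ↔ ¬ u i := by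
  unfold sgn; split_ifs with h <;> norm_num [h]

theorem sum_sgn_mul (g : Fin n → ℝ) :
    ∑ i, sgn u i * g i =
      ∑ i ∈ univ.filter (sgn u · = 1), g i - ∑ i ∈ univ.filter (sgn u · = -1), g i := by
  simp only [sgn_eq_one_iff, sgn_eq_neg_one_iff]
  simp only [sgn, ite_mul, one_mul, neg_one_mul, sum_ite, sum_neg_distrib]
  ring

theorem card_filter_sgn_eq_one (hu : ∑ i, sgn u i = 0) :
    #(univ.filter (sgn u · = 1)) = #(univ.filter (sgn u · = -1)) := by
  have := sum_sgn_mul u 1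
  simp only [Pi.one_apply, mul_one, sum_const, nsmul_one, hu] at this
  exact_mod_cast (sub_eq_zero.1 this.symm)

end Sign

theorem stmt7_general {𝒳 : Type*} [MetricSpace 𝒳] (n : ℕ) (X : Fin n → 𝒳)
    (u : Fin n → Bool) (hu : ∑ i, sgn u i = 0) :
    sSup {s : ℝ | ∃ f : 𝒳 → ℝ, LipschitzWith 1 f ∧ s = ∑ i, sgn u i * f (X i)}
      = sInf {c : ℝ | ∃ π : Fin n → Fin n,
          Set.InjOn π {i | sgn u i = 1} ∧
          (∀ i, sgn u i = 1 → sgn u (π i) = -1) ∧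
          c = ∑ i ∈ Finset.univ.filter (fun i => sgn u i = 1),
                dist (X i) (X (π i))} := by
  simp_rw [sum_sgn_mul]
  convert sSup_sum_sub_sum_eq_sInf_sum_dist (card_filter_sgn_eq_one u hu) X using 6
  simp [Set.MapsTo]

/-- Kantorovich-type duality: for a fixed balanced assignment `u ∈ U`, the worst-case
Lipschitz imbalance `sup_{f 1-Lipschitz} ∑ uᵢ f(Xᵢ)` equals the minimum-cost bipartite
matching (over bijections `π : S → Sᶜ` of the two groups) of the pairwise distances. -/
theorem stmt7 {𝒳 : Type*} [MetricSpace 𝒳] (n : ℕ) (hne : Even n) (X : Fin n → 𝒳)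
    (u : Fin n → Bool) (hu : ∑ i, sgn u i = 0) :
    sSup {s : ℝ | ∃ f : 𝒳 → ℝ, LipschitzWith 1 f ∧ s = ∑ i, sgn u i * f (X i)}
      = sInf {c : ℝ | ∃ π : Fin n → Fin n,
          Set.InjOn π {i | sgn u i = 1} ∧
          (∀ i, sgn u i = 1 → sgn u (π i) = -1) ∧
          c = ∑ i ∈ Finset.univ.filter (fun i => sgn u i = 1),
                dist (X i) (X (π i))} :=
  stmt7_general n X u hu
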